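/- arXiv:2410.18056 — 2 statements merged into one kernel-verified Lean document; each statement's English description precedes it below -/
import Mathlib

section
/- Setting w = 0 in the finite bivariate N-Konhauser polynomial gives ₖN_{s;υ}^{(p,q)}(t,0) = N_s^{(p)}(t)/Γ(q+1), where N_s^{(p)} is the finite orthogonal polynomial. -/
open Real MeasureTheory Finset

/-- Pochhammer symbol (a)_n = a(a+1)⋯(a+n-1). -/
noncomputable def poch (a : ℝ) (n : ℕ) : ℝ := ∏ i ∈ Finset.range n, (a + i)

/-- Generalized binomial coefficient C(a,k) = a(a-1)⋯(a-k+1)/k!. -/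
noncomputable def gchoose (a : ℝ) (k : ℕ) : ℝ :=
  (∏ i ∈ Finset.range k, (a - i)) / k.factorial

/-- Konhauser polynomial of the first kind Z_s^{(χ)}(w;υ). -/
noncomputable def konZ (s : ℕ) (χ : ℝ) (υ : ℕ) (w : ℝ) : ℝ :=
  (Real.Gamma ((υ : ℝ) * (s : ℝ) + χ + 1) / s.factorial) *
    ∑ l ∈ Finset.range (s + 1),
      (-1 : ℝ) ^ l * (s.choose l : ℝ) * w ^ (υ * l) / Real.Gamma ((υ : ℝ) * (l : ℝ) + χ + 1)

/-- Konhauser polynomial of the second kind Y_s^{(χ)}(w;υ). -/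
noncomputable def konY (s : ℕ) (χ : ℝ) (υ : ℕ) (w : ℝ) : ℝ :=
  (1 / (s.factorial : ℝ)) *
    ∑ m ∈ Finset.range (s + 1), w ^ m / m.factorial *
      ∑ l ∈ Finset.range (m + 1),
        (-1 : ℝ) ^ l * (m.choose l : ℝ) * poch ((χ + (l : ℝ) + 1) / (υ : ℝ)) s

/-- Finite orthogonal polynomial N_s^{(p)}(w). -/
noncomputable def finN (s : ℕ) (p : ℝ) (w : ℝ) : ℝ :=
  (-1 : ℝ) ^ s *
    ∑ k ∈ Finset.range (s + 1),
      (k.factorial : ℝ) * gchoose (p - (s : ℝ) - 1) k * (s.choose (s - k) : ℝ) * (-w) ^ k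

/-- Generalized Laguerre polynomial L_n^{(α)}(x). -/
noncomputable def lagL (n : ℕ) (α : ℝ) (x : ℝ) : ℝ :=
  ∑ k ∈ Finset.range (n + 1),
    (-1 : ℝ) ^ k * gchoose ((n : ℝ) + α) (n - k) * x ^ k / k.factorial

/-- Finite bivariate N-Konhauser polynomial (first set) ₖN_{s;υ}^{(p,q)}(t,w). -/
noncomputable def NK (s : ℕ) (υ : ℕ) (p q : ℝ) (t w : ℝ) : ℝ :=
  Real.Gamma (p - (s : ℝ)) *
    ∑ k ∈ Finset.range (s + 1), ∑ m ∈ Finset.range (s - k + 1),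
      poch (-(s : ℝ)) (k + m) * t ^ (s - k) * w ^ (υ * m) /
        (Real.Gamma (p - 2 * (s : ℝ) + (k : ℝ)) * Real.Gamma (q + 1 + (υ : ℝ) * (m : ℝ)) *
          k.factorial * m.factorial)

/-- Finite bivariate N-Konhauser polynomial (second set) ₖ𝒩_{s;υ}^{(p,q)}(t,w). -/
noncomputable def NK2 (s : ℕ) (υ : ℕ) (p q : ℝ) (t w : ℝ) : ℝ :=
  finN s p t * ∑ k ∈ Finset.range (s + 1), konY k q υ w

/-- Generalized Laguerre-Konhauser polynomial of Bin-Saad ᵤL_s^{(p,q)}(t,w). -/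
noncomputable def LKgen (s : ℕ) (υ : ℕ) (p q : ℝ) (t w : ℝ) : ℝ :=
  (s.factorial : ℝ) *
    ∑ k ∈ Finset.range (s + 1), ∑ m ∈ Finset.range (s - k + 1),
      (-1 : ℝ) ^ (k + m) * t ^ ((k : ℝ) + p) * w ^ ((υ : ℝ) * (m : ℝ) + q) /
        ((k.factorial : ℝ) * m.factorial * (s - k - m).factorial *
          Real.Gamma ((k : ℝ) + p + 1) * Real.Gamma (q + (υ : ℝ) * (m : ℝ) + 1))

/-- Bivariate biorthogonal Laguerre-Konhauser polynomial ₖL_{s;υ}^{(p,q)}(t,w). -/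
noncomputable def KL (s : ℕ) (υ : ℕ) (p q : ℝ) (t w : ℝ) : ℝ :=
  (Real.Gamma (p + 1 + (s : ℝ)) / s.factorial) *
    ∑ k ∈ Finset.range (s + 1), ∑ m ∈ Finset.range (s - k + 1),
      poch (-(s : ℝ)) (k + m) * t ^ k * w ^ (υ * m) /
        (Real.Gamma (p + 1 + (k : ℝ)) * Real.Gamma (q + 1 + (υ : ℝ) * (m : ℝ)) *
          k.factorial * m.factorial)

lemma poch_neg_nat (s j : ℕ) (hj : j ≤ s) :
    poch (-(s : ℝ)) j * ((s - j).factorial : ℝ) = (-1) ^ j * (s.factorial : ℝ) := by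
  induction j with
  | zero => simp [poch]
  | succ j ih =>
    have hj' : j ≤ s := Nat.le_of_succ_le hj
    have hlt : j < s := hj
    have hfac : (s - j).factorial = (s - j) * (s - j - 1).factorial := by
      rw [← Nat.succ_pred_eq_of_pos (Nat.sub_pos_of_lt hlt)]
      simp [Nat.factorial_succ]
    have hsub : s - (j + 1) = s - j - 1 := by omega
    have hpoch : poch (-(s : ℝ)) (j + 1) = poch (-(s : ℝ)) j * (-(s : ℝ) + j) := by
      simp [poch, Finset.prod_range_succ]
    have hcast : (-(s : ℝ) + j) = -((s - j : ℕ) : ℝ) := by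
      push_cast [Nat.cast_sub hj']
      ring
    have ih' := ih hj'
    have hfacR : ((s - j).factorial : ℝ) = ((s - j : ℕ) : ℝ) * ((s - j - 1).factorial : ℝ) := by
      exact_mod_cast congrArg Nat.cast hfac
    rw [hfacR] at ih'
    rw [hpoch, hsub, hcast]
    linear_combination (-1 : ℝ) * ih'

lemma gamma_prod (x : ℝ) (k : ℕ) (hk : (k : ℝ) < x) :
    Real.Gamma x = (∏ i ∈ Finset.range k, (x - 1 - i)) * Real.Gamma (x - k) := by
  induction k with
  | zero => simp
  | succ k ih =>
    have hk' : (k : ℝ) < x := by push_cast at hk ⊢; linarith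
    have hpos : 0 < x - k - 1 := by push_cast at hk; linarith
    have hne : x - k - 1 ≠ 0 := ne_of_gt hpos
    have hG : Real.Gamma (x - k) = (x - k - 1) * Real.Gamma (x - k - 1) := by
      have := Real.Gamma_add_one hne
      have harg : x - k - 1 + 1 = x - k := by ring
      rw [harg] at this
      rw [this]
    rw [ih hk', hG, Finset.prod_range_succ]
    have harg2 : x - ((k : ℝ) + 1) = x - k - 1 := by ring
    push_cast [harg2]
    ring

theorem NK_at_zero (υ : ℕ) (hυ : 0 < υ) (p q : ℝ) (hq : q > -1) (s : ℕ)
    (hs : (s : ℝ) < (p - 1) / 2) (t : ℝ) :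
    NK s υ p q t 0 = finN s p t / Real.Gamma (q + 1) := by
  have hq1 : (0 : ℝ) < q + 1 := by linarith
  have hGq : Real.Gamma (q + 1) ≠ 0 := ne_of_gt (Real.Gamma_pos_of_pos hq1)
  have hp2s : 2 * (s : ℝ) + 1 < p := by linarith [hs]
  -- collapse inner sum
  have h1 : NK s υ p q t 0 = Real.Gamma (p - s) *
      ∑ k ∈ Finset.range (s + 1),
        poch (-(s : ℝ)) k * t ^ (s - k) /
          (Real.Gamma (p - 2 * (s : ℝ) + (k : ℝ)) * Real.Gamma (q + 1) *
            k.factorial) := by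
    unfold NK
    congr 1
    refine Finset.sum_congr rfl fun k hk => ?_
    rw [Finset.sum_eq_single_of_mem 0 (Finset.mem_range.2 (Nat.succ_pos _))]
    · simp
    · intro b _ hb
      have : υ * b ≠ 0 := Nat.mul_ne_zero hυ.ne' hb
      simp [zero_pow this]
  rw [h1]
  unfold finN
  rw [← Finset.sum_range_reflect
    (fun k => (k.factorial : ℝ) * gchoose (p - (s : ℝ) - 1) k * (s.choose (s - k) : ℝ) * (-t) ^ k) (s + 1),
    Finset.mul_sum, Finset.mul_sum, Finset.sum_div]
  refine Finset.sum_congr rfl fun k hk => ?_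
  have hks : k ≤ s := Nat.lt_succ_iff.mp (Finset.mem_range.mp hk)
  simp only [Nat.add_sub_cancel]
  rw [Nat.sub_sub_self hks]
  -- key facts
  have hcastarg : p - (s : ℝ) - ((s - k : ℕ) : ℝ) = p - 2 * (s : ℝ) + (k : ℝ) := by
    push_cast [Nat.cast_sub hks]; ring
  have hG1 : Real.Gamma (p - s) =
      (∏ i ∈ Finset.range (s - k), (p - (s : ℝ) - 1 - i)) *
        Real.Gamma (p - 2 * (s : ℝ) + (k : ℝ)) := by
    have hlt : ((s - k : ℕ) : ℝ) < p - s := by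
      push_cast [Nat.cast_sub hks]
      linarith
    have := gamma_prod (p - (s : ℝ)) (s - k) hlt
    rw [hcastarg] at this
    exact this
  have hGpos : 0 < Real.Gamma (p - 2 * (s : ℝ) + (k : ℝ)) := by
    apply Real.Gamma_pos_of_pos
    have : (0:ℝ) ≤ (k:ℝ) := Nat.cast_nonneg k
    linarith
  have hpoch := poch_neg_nat s k hks
  have hgch : gchoose (p - (s : ℝ) - 1) (s - k) =
      (∏ i ∈ Finset.range (s - k), (p - (s : ℝ) - 1 - i)) / ((s - k).factorial : ℝ) := rfl
  have hchoose : ((s.choose k : ℕ) : ℝ) * (k.factorial : ℝ) * ((s - k).factorial : ℝ)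
      = (s.factorial : ℝ) := by
    exact_mod_cast congrArg Nat.cast (Nat.choose_mul_factorial_mul_factorial hks)
  have hsign : ((-1 : ℝ)) ^ (s - k) * (-1 : ℝ) ^ k = (-1 : ℝ) ^ s := by
    rw [← pow_add, Nat.sub_add_cancel hks]
  have hkf : (k.factorial : ℝ) ≠ 0 := Nat.cast_ne_zero.mpr k.factorial_ne_zero
  have hskf : ((s - k).factorial : ℝ) ≠ 0 := Nat.cast_ne_zero.mpr (s - k).factorial_ne_zero
  have hneg : ((-t) : ℝ) ^ (s - k) = (-1 : ℝ) ^ (s - k) * t ^ (s - k) := by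
    rw [neg_pow]
  have hC : ((s.choose k : ℕ) : ℝ) = (s.factorial : ℝ) / ((k.factorial : ℝ) * ((s - k).factorial : ℝ)) := by
    rw [eq_div_iff (mul_ne_zero hkf hskf)]
    linear_combination hchoose
  have hpoch' : poch (-(s : ℝ)) k = (-1) ^ k * (s.factorial : ℝ) / ((s - k).factorial : ℝ) := by
    rw [eq_div_iff hskf]; exact hpoch
  have hsk : ((-1 : ℝ)) ^ (s - k) = (-1) ^ s * (-1) ^ k := by
    have h2 : ((-1 : ℝ)) ^ k * (-1) ^ k = 1 := by
      rw [← pow_add, ← two_mul, pow_mul]; norm_num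
    calc ((-1 : ℝ)) ^ (s - k) = (-1) ^ (s - k) * ((-1) ^ k * (-1) ^ k) := by rw [h2, mul_one]
      _ = (-1) ^ s * (-1) ^ k := by rw [← mul_assoc, hsign]
  rw [hG1, hgch, hpoch', hC, hneg, hsk]
  have hGne := ne_of_gt hGpos
  have hss : ((-1 : ℝ)) ^ s * (-1) ^ s = 1 := by
    rw [← pow_add]; exact Even.neg_one_pow ⟨s, rfl⟩
  set P := ∏ i ∈ Finset.range (s - k), (p - (s : ℝ) - 1 - i) with hP
  set G := Real.Gamma (p - 2 * (s : ℝ) + (k : ℝ)) with hGdef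
  rcases neg_one_pow_eq_or ℝ s with h | h <;> rw [h] <;> field_simp
end

section
/- The first set of finite bivariate N-Konhauser polynomials satisfies the recurrence t ∂_t ₖN_{s;υ}^{(p,q)}(t,w) = s (ₖN_{s;υ}^{(p,q)}(t,w) + ₖN_{s-1;υ}^{(p-1,q)}(t,w)) for s ≥ 1. -/
open Real MeasureTheory Finset

lemma poch_succ (a : ℝ) (j : ℕ) : poch a (j + 1) = a * poch (a + 1) j := by
  unfold poch
  rw [Finset.prod_range_succ']
  simp only [Nat.cast_zero, add_zero]
  rw [mul_comm]
  congr 1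
  exact Finset.prod_congr rfl fun i _ => by push_cast; ring

theorem NK_recurrence_t (υ : ℕ) (hυ : 0 < υ) (p q : ℝ) (hq : q > -1) (s : ℕ) (hs : 1 ≤ s)
    (hsp : (s : ℝ) < (p - 1) / 2) (t w : ℝ) :
    t * deriv (fun x => NK s υ p q x w) t =
      (s : ℝ) * (NK s υ p q t w + NK (s - 1) υ (p - 1) q t w) := by
  obtain ⟨n, rfl⟩ : ∃ n, s = n + 1 := ⟨s - 1, (Nat.succ_pred_eq_of_pos hs).symm⟩
  have hsp' : 2 * ((n:ℝ) + 1) + 1 < p := by push_cast at hsp; linarith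
  have hder : HasDerivAt (fun x => NK (n+1) υ p q x w)
      (Real.Gamma (p - ((n+1 : ℕ) : ℝ)) *
        ∑ k ∈ Finset.range (n + 1 + 1), ∑ m ∈ Finset.range (n + 1 - k + 1),
          poch (-((n+1:ℕ) : ℝ)) (k + m) * ((((n+1-k : ℕ)) : ℝ) * t ^ (n+1-k-1)) * w ^ (υ * m) /
            (Real.Gamma (p - 2 * ((n+1:ℕ) : ℝ) + (k : ℝ)) * Real.Gamma (q + 1 + (υ : ℝ) * (m : ℝ)) *
              k.factorial * m.factorial)) t := by
    unfold NK
    exact HasDerivAt.const_mul _ (HasDerivAt.fun_sum fun k _ => HasDerivAt.fun_sum fun m _ =>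
      (((hasDerivAt_pow (n+1-k) t).const_mul _).mul_const _).div_const _)
  rw [hder.deriv]
  simp only [Nat.add_sub_cancel]
  unfold NK
  push_cast
  rw [show p - 1 - (n:ℝ) = p - ((n:ℝ) + 1) by ring]
  -- abbreviations (as plain terms, matched syntactically)
  have hpull : t * ∑ k ∈ Finset.range (n + 1 + 1), ∑ m ∈ Finset.range (n + 1 - k + 1),
        poch (-((n:ℝ) + 1)) (k + m) * (↑(n + 1 - k) * t ^ (n + 1 - k - 1)) * w ^ (υ * m) /
          (Real.Gamma (p - 2 * ((n:ℝ) + 1) + ↑k) * Real.Gamma (q + 1 + ↑υ * ↑m) * ↑k.factorial * ↑m.factorial)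
      = ∑ k ∈ Finset.range (n + 1 + 1), ∑ m ∈ Finset.range (n + 1 - k + 1),
        t * (poch (-((n:ℝ) + 1)) (k + m) * (↑(n + 1 - k) * t ^ (n + 1 - k - 1)) * w ^ (υ * m) /
          (Real.Gamma (p - 2 * ((n:ℝ) + 1) + ↑k) * Real.Gamma (q + 1 + ↑υ * ↑m) * ↑k.factorial * ↑m.factorial)) := by
    rw [Finset.mul_sum]
    exact Finset.sum_congr rfl fun k _ => Finset.mul_sum _ _ _
  have hL : (∑ k ∈ Finset.range (n + 1 + 1), ∑ m ∈ Finset.range (n + 1 - k + 1),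
        t * (poch (-((n:ℝ) + 1)) (k + m) * (↑(n + 1 - k) * t ^ (n + 1 - k - 1)) * w ^ (υ * m) /
          (Real.Gamma (p - 2 * ((n:ℝ) + 1) + ↑k) * Real.Gamma (q + 1 + ↑υ * ↑m) * ↑k.factorial * ↑m.factorial)))
      = ((n:ℝ) + 1) * (∑ k ∈ Finset.range (n + 1 + 1), ∑ m ∈ Finset.range (n + 1 - k + 1),
          poch (-((n:ℝ) + 1)) (k + m) * t ^ (n + 1 - k) * w ^ (υ * m) /
            (Real.Gamma (p - 2 * ((n:ℝ) + 1) + ↑k) * Real.Gamma (q + 1 + ↑υ * ↑m) * ↑k.factorial * ↑m.factorial))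
        - ∑ k ∈ Finset.range (n + 1 + 1), ∑ m ∈ Finset.range (n + 1 - k + 1),
          (k:ℝ) * (poch (-((n:ℝ) + 1)) (k + m) * t ^ (n + 1 - k) * w ^ (υ * m) /
            (Real.Gamma (p - 2 * ((n:ℝ) + 1) + ↑k) * Real.Gamma (q + 1 + ↑υ * ↑m) * ↑k.factorial * ↑m.factorial)) := by
    rw [Finset.mul_sum, ← Finset.sum_sub_distrib]
    refine Finset.sum_congr rfl fun k hk => ?_
    rw [Finset.mul_sum, ← Finset.sum_sub_distrib]
    refine Finset.sum_congr rfl fun m _ => ?_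
    have hk' : k ≤ n + 1 := Nat.lt_succ_iff.mp (Finset.mem_range.mp hk)
    rcases Nat.lt_or_ge k (n+1) with h | h
    · have e1 : n + 1 - k = (n - k) + 1 := by omega
      have e2 : n + 1 - k - 1 = n - k := by omega
      have e3 : ((n + 1 - k : ℕ) : ℝ) = (n:ℝ) + 1 - (k:ℝ) := by
        rw [Nat.cast_sub hk']; push_cast; ring
      rw [e3, e2, e1, pow_succ]
      ring
    · have hk2 : k = n + 1 := by omega
      subst hk2
      rw [show n + 1 - (n + 1) = 0 by omega]
      push_cast
      ring
  have hshift : (∑ k ∈ Finset.range (n + 1 + 1), ∑ m ∈ Finset.range (n + 1 - k + 1),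
        (k:ℝ) * (poch (-((n:ℝ) + 1)) (k + m) * t ^ (n + 1 - k) * w ^ (υ * m) /
          (Real.Gamma (p - 2 * ((n:ℝ) + 1) + ↑k) * Real.Gamma (q + 1 + ↑υ * ↑m) * ↑k.factorial * ↑m.factorial)))
      = ∑ k ∈ Finset.range (n + 1), ∑ m ∈ Finset.range (n - k + 1),
          (-((n:ℝ) + 1)) * (poch (-(n:ℝ)) (k + m) * t ^ (n - k) * w ^ (υ * m) /
            (Real.Gamma (p - 1 - 2 * (n:ℝ) + ↑k) * Real.Gamma (q + 1 + ↑υ * ↑m) * ↑k.factorial * ↑m.factorial)) := by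
    rw [Finset.sum_range_succ']
    simp only [Nat.cast_zero, zero_mul, Finset.sum_const_zero, add_zero, Nat.succ_sub_succ_eq_sub]
    refine Finset.sum_congr rfl fun k hk => Finset.sum_congr rfl fun m hm => ?_
    have hΓ1 : Real.Gamma (p - 1 - 2 * (n:ℝ) + ↑k) ≠ 0 := by
      refine ne_of_gt (Real.Gamma_pos_of_pos ?_)
      have : (0:ℝ) ≤ (k:ℝ) := Nat.cast_nonneg k
      linarith
    have hΓ2 : Real.Gamma (q + 1 + ↑υ * ↑m) ≠ 0 := by
      refine ne_of_gt (Real.Gamma_pos_of_pos ?_)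
      have h1 : (0:ℝ) ≤ (υ:ℝ) * (m:ℝ) := by positivity
      linarith
    have hkf : ((k.factorial : ℕ) : ℝ) ≠ 0 := Nat.cast_ne_zero.mpr k.factorial_ne_zero
    have hmf : ((m.factorial : ℕ) : ℝ) ≠ 0 := Nat.cast_ne_zero.mpr m.factorial_ne_zero
    have hk1 : ((k:ℝ) + 1) ≠ 0 := by positivity
    rw [show k + 1 + m = (k + m) + 1 by omega, poch_succ,
      show -((n:ℝ) + 1) + 1 = -(n:ℝ) by ring]
    push_cast [Nat.factorial_succ]
    rw [show p - 2 * ((n:ℝ) + 1) + ((k:ℝ) + 1) = p - 1 - 2 * (n:ℝ) + ↑k by ring]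
    field_simp
  have hfin : t * ∑ k ∈ Finset.range (n + 1 + 1), ∑ m ∈ Finset.range (n + 1 - k + 1),
        poch (-((n:ℝ) + 1)) (k + m) * (↑(n + 1 - k) * t ^ (n + 1 - k - 1)) * w ^ (υ * m) /
          (Real.Gamma (p - 2 * ((n:ℝ) + 1) + ↑k) * Real.Gamma (q + 1 + ↑υ * ↑m) * ↑k.factorial * ↑m.factorial)
      = ((n:ℝ) + 1) * ((∑ k ∈ Finset.range (n + 1 + 1), ∑ m ∈ Finset.range (n + 1 - k + 1),
          poch (-((n:ℝ) + 1)) (k + m) * t ^ (n + 1 - k) * w ^ (υ * m) /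
            (Real.Gamma (p - 2 * ((n:ℝ) + 1) + ↑k) * Real.Gamma (q + 1 + ↑υ * ↑m) * ↑k.factorial * ↑m.factorial))
        + ∑ k ∈ Finset.range (n + 1), ∑ m ∈ Finset.range (n - k + 1),
          poch (-(n:ℝ)) (k + m) * t ^ (n - k) * w ^ (υ * m) /
            (Real.Gamma (p - 1 - 2 * (n:ℝ) + ↑k) * Real.Gamma (q + 1 + ↑υ * ↑m) * ↑k.factorial * ↑m.factorial)) := by
    rw [hpull, hL, hshift]
    rw [show (∑ k ∈ Finset.range (n + 1), ∑ m ∈ Finset.range (n - k + 1),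
          (-((n:ℝ) + 1)) * (poch (-(n:ℝ)) (k + m) * t ^ (n - k) * w ^ (υ * m) /
            (Real.Gamma (p - 1 - 2 * (n:ℝ) + ↑k) * Real.Gamma (q + 1 + ↑υ * ↑m) * ↑k.factorial * ↑m.factorial)))
        = (-((n:ℝ) + 1)) * ∑ k ∈ Finset.range (n + 1), ∑ m ∈ Finset.range (n - k + 1),
          poch (-(n:ℝ)) (k + m) * t ^ (n - k) * w ^ (υ * m) /
            (Real.Gamma (p - 1 - 2 * (n:ℝ) + ↑k) * Real.Gamma (q + 1 + ↑υ * ↑m) * ↑k.factorial * ↑m.factorial)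
        from by rw [Finset.mul_sum]; exact Finset.sum_congr rfl fun k _ => (Finset.mul_sum _ _ _).symm]
    ring
  linear_combination Real.Gamma (p - ((n:ℝ) + 1)) * hfin
end
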